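/- arXiv:1803.01133 — 3 statements merged into one kernel-verified Lean document; each statement's English description precedes it below -/
import Mathlib

section
/- Let T be a bounded m-isometry on a complex Hilbert space. Then the spectrum of T is contained in the closed unit disc; equivalently the spectral radius of T is at most 1. -/
open ContinuousLinearMap

variable {H : Type*} [NormedAddCommGroup H] [InnerProductSpace ℂ H] [CompleteSpace H]

/-- `beta T n = ∑_{j=0}^n (-1)^{n-j} C(n,j) (T*)^j T^j`. -/
noncomputable def beta (T : H →L[ℂ] H) (n : ℕ) : H →L[ℂ] H :=
  ∑ j ∈ Finset.range (n + 1),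
    ((-1 : ℂ) ^ (n - j) * (n.choose j : ℂ)) • ((ContinuousLinearMap.adjoint T) ^ j * T ^ j)

/-!
With `L X = T* X T` acting on `B(H)`, one has `β_n = (L - 1)^n 1` and `(T*)^n T^n = L^n 1`.
Expanding `L^n = ((L - 1) + 1)^n` binomially, the hypothesis `(L - 1)^m 1 = 0` leaves
`(T*)^n T^n = ∑_{k<m} C(n,k) β_k`, so `‖T^n‖² = ‖(T*)^n T^n‖ = O(n^m)`. Every `λ` in the
spectrum satisfies `|λ|^n ≤ ‖T^n‖`, and polynomial growth of `|λ|^{2n}` forces `|λ| ≤ 1`.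
-/

open Finset Filter Asymptotics

theorem LinearMap.mulLeftRight_pow_apply {R A : Type*} [CommSemiring R] [Semiring A]
    [Algebra R A] (a b x : A) (n : ℕ) : (mulLeftRight R (a, b) ^ n) x = a ^ n * x * b ^ n := by
  induction n with
  | zero => simp
  | succ n ih =>
    rw [pow_succ', Module.End.mul_apply, ih, mulLeftRight_apply, pow_succ', pow_succ]
    simp only [mul_assoc]

namespace Module.End

variable {R M : Type*} [CommRing R] [AddCommGroup M] [Module R M] (L : Module.End R M) (v : M)

theorem sub_one_pow_apply (n : ℕ) :
    ((L - 1) ^ n) v = ∑ j ∈ range (n + 1), ((-1 : R) ^ (n - j) * n.choose j) • (L ^ j) v := by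
  rw [sub_eq_add_neg, (Commute.neg_one_right L).add_pow, LinearMap.sum_apply]
  refine sum_congr rfl fun j _ => ?_
  rw [show (-1 : Module.End R M) = algebraMap R _ (-1) by simp, ← map_pow, mul_assoc,
    ← Nat.cast_comm, mul_apply, mul_apply, algebraMap_end_apply, map_smul, mul_smul]
  simp [Nat.cast_smul_eq_nsmul]

theorem pow_apply_eq_sum_of_sub_one_pow_apply_eq_zero {m : ℕ} (hm : ((L - 1) ^ m) v = 0)
    (n : ℕ) : (L ^ n) v = ∑ k ∈ range m, (n.choose k : R) • ((L - 1) ^ k) v := by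
  have hbinom : (L ^ n) v = ∑ k ∈ range (n + 1), (n.choose k : R) • ((L - 1) ^ k) v := by
    conv_lhs => rw [← sub_add_cancel L 1, (Commute.one_right (L - 1)).add_pow,
      LinearMap.sum_apply]
    simp [Nat.cast_smul_eq_nsmul]
  have hvanish : ∀ k, m ≤ k → ((L - 1) ^ k) v = 0 := fun k hk => by
    rw [← Nat.sub_add_cancel hk, pow_add, mul_apply, hm, map_zero]
  rw [hbinom, sum_subset (range_subset_range.2 (Nat.le_add_right (n + 1) m)),
    ← sum_subset (range_subset_range.2 (Nat.le_add_left m (n + 1)))]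
  · intro k _ hk
    rw [hvanish k (by simpa using hk), smul_zero]
  · intro k _ hk
    rw [Nat.choose_eq_zero_of_lt (by simpa [Nat.lt_succ_iff] using hk), Nat.cast_zero, zero_smul]

end Module.End

theorem le_one_of_pow_isBigO_pow {r : ℝ} {m : ℕ}
    (h : (fun n : ℕ => r ^ n) =O[atTop] fun n => (n : ℝ) ^ m) : r ≤ 1 := by
  by_contra! hr
  refine isLittleO_irrefl (Eventually.frequently (Eventually.of_forall fun n => ?_))
    (h.trans_isLittleO (isLittleO_pow_const_const_pow_of_one_lt m hr))
  exact pow_ne_zero n (by linarith)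

theorem spectrum.norm_le_one_of_norm_pow_pow_isBigO {𝕜 A : Type*} [NormedField 𝕜] [NormedRing A]
    [NormedAlgebra 𝕜 A] [CompleteSpace A] {a : A} {k m : ℕ} (hk : k ≠ 0)
    (h : (fun n : ℕ => ‖a ^ n‖ ^ k) =O[atTop] fun n => (n : ℝ) ^ m) {x : 𝕜}
    (hx : x ∈ spectrum 𝕜 a) : ‖x‖ ≤ 1 := by
  have hpow : ∀ n : ℕ, (‖x‖ ^ k) ^ n ≤ ‖(1 : A)‖ ^ k * ‖a ^ n‖ ^ k := fun n => by
    rw [← pow_mul, mul_comm k, pow_mul, ← norm_pow, ← mul_pow, mul_comm]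
    exact pow_le_pow_left₀ (norm_nonneg _) (norm_le_norm_mul_of_mem (pow_mem_pow a n hx)) k
  refine (pow_le_one_iff_of_nonneg (norm_nonneg x) hk).1 (le_one_of_pow_isBigO_pow (m := m) ?_)
  refine (isBigO_of_le' (c := ‖(1 : A)‖ ^ k) _ fun n => ?_).trans h
  rw [Real.norm_of_nonneg (by positivity), Real.norm_of_nonneg (by positivity)]
  exact hpow n

variable (T : H →L[ℂ] H)

theorem beta_eq_mulLeftRight_sub_one_pow_apply (n : ℕ) :
    beta T n = ((LinearMap.mulLeftRight ℂ (adjoint T, T) - 1) ^ n) 1 := by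
  simp [beta, Module.End.sub_one_pow_apply, LinearMap.mulLeftRight_pow_apply]

theorem adjoint_pow_mul_pow_eq_sum_beta {m : ℕ} (hT : beta T m = 0) (n : ℕ) :
    adjoint T ^ n * T ^ n = ∑ k ∈ range m, (n.choose k : ℂ) • beta T k := by
  rw [beta_eq_mulLeftRight_sub_one_pow_apply] at hT
  simpa [beta_eq_mulLeftRight_sub_one_pow_apply, LinearMap.mulLeftRight_pow_apply] using
    Module.End.pow_apply_eq_sum_of_sub_one_pow_apply_eq_zero _ _ hT n

theorem norm_pow_sq_isBigO {m : ℕ} (hT : beta T m = 0) :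
    (fun n : ℕ => ‖T ^ n‖ ^ 2) =O[atTop] fun n => (n : ℝ) ^ m := by
  refine IsBigO.of_bound (∑ k ∈ range m, ‖beta T k‖) ?_
  filter_upwards [eventually_ge_atTop 1] with n hn
  have hchoose : ∀ k ∈ range m, (n.choose k : ℝ) ≤ (n : ℝ) ^ m := fun k hk => by
    calc (n.choose k : ℝ) ≤ (n : ℝ) ^ k := by exact_mod_cast Nat.choose_le_pow n k
      _ ≤ (n : ℝ) ^ m := pow_le_pow_right₀ (by exact_mod_cast hn) (mem_range.1 hk).le
  calc ‖‖T ^ n‖ ^ 2‖ = ‖adjoint T ^ n * T ^ n‖ := by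
        rw [norm_pow, norm_norm, sq, ← CStarRing.norm_star_mul_self, star_pow, star_eq_adjoint]
    _ ≤ ∑ k ∈ range m, (n.choose k : ℝ) * ‖beta T k‖ := by
        rw [adjoint_pow_mul_pow_eq_sum_beta T hT]
        refine (norm_sum_le _ _).trans_eq (sum_congr rfl fun k _ => ?_)
        rw [norm_smul, Complex.norm_natCast]
    _ ≤ ∑ k ∈ range m, (n : ℝ) ^ m * ‖beta T k‖ :=
        sum_le_sum fun k hk => mul_le_mul_of_nonneg_right (hchoose k hk) (norm_nonneg _)
    _ = (∑ k ∈ range m, ‖beta T k‖) * ‖(n : ℝ) ^ m‖ := by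
        rw [← mul_sum, mul_comm, Real.norm_of_nonneg (by positivity)]

theorem spectrum_subset_closedBall (T : H →L[ℂ] H) (m : ℕ) (hT : beta T m = 0) :
    spectrum ℂ T ⊆ Metric.closedBall (0 : ℂ) 1 ∧ spectralRadius ℂ T ≤ 1 := by
  have hle : ∀ x ∈ spectrum ℂ T, ‖x‖ ≤ 1 := fun x hx =>
    spectrum.norm_le_one_of_norm_pow_pow_isBigO two_ne_zero (norm_pow_sq_isBigO T hT) hx
  refine ⟨fun x hx => mem_closedBall_zero_iff.2 (hle x hx), iSup₂_le fun x hx => ?_⟩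
  exact_mod_cast hle x hx
end

section
/- Let T be a bounded m-isometry on a complex Hilbert space H and e a unit vector. Define μ on integers by μ(k) = ⟨β_{m−1}(T) e, T^k e⟩ for k ≥ 0 and μ(−k) = conj(μ(k)). Then ⟨β_{m−1}(T) T^k e, T^l e⟩ = μ(l−k) for all k, l ≥ 0, and the quadratic form ∑_{k,l=0}^{N} a_k conj(a_l) μ(l−k) = ⟨β_{m−1}(T) p(T)e, p(T)e⟩ ≥ 0 for every polynomial p(z) = ∑_{k=0}^{N} a_k z^k; i.e., (μ(l−k))_{k,l} is a positive semidefinite kernel. -/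
open ContinuousLinearMap

variable {H : Type*} [NormedAddCommGroup H] [InnerProductSpace ℂ H] [CompleteSpace H]

open Filter fwdDiff

/-!
The sequence `β_n(T)` is the `n`-th forward difference at `0` of `j ↦ (T*)^j T^j`, so
`β_{n+1} = T* β_n T - β_n` and, for every `x`, the `n`-th forward difference of the nonnegative
sequence `j ↦ ‖T^j x‖²` is `j ↦ re ⟪T^j x, β_n T^j x⟫`. If `β_m = 0`, then `β_{m-1}` is invariant
under `X ↦ T* X T`, so the `(m-1)`-th difference is the constant `re ⟪x, β_{m-1} x⟫`; were it
negative, the sequence would tend to `-∞`. Hence `β_{m-1} ≥ 0`, and its invariance makes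
`⟪β_{m-1} T^k e, T^l e⟫` depend only on `l - k`.
-/

section ForwardDifference

theorem fwdDiff_iter_addMonoidHom_comp {M G G' : Type*} [AddCommMonoid M] [AddCommGroup G]
    [AddCommGroup G'] (h : M) (φ : G →+ G') (f : M → G) (n : ℕ) :
    Δ_[h] ^[n] (φ ∘ f) = φ ∘ Δ_[h] ^[n] f := by
  induction n with
  | zero => rfl
  | succ n ih =>
    rw [Function.iterate_succ_apply', Function.iterate_succ_apply', ih]
    ext y
    simp [fwdDiff]

variable {f : ℕ → ℝ}

theorem tendsto_atBot_of_eventually_fwdDiff_le {c : ℝ} (hc : c < 0)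
    (hf : ∀ᶠ n in atTop, Δ_[1] f n ≤ c) : Tendsto f atTop atBot := by
  obtain ⟨N, hN⟩ := eventually_atTop.1 hf
  rw [← tendsto_add_atTop_iff_nat N]
  have hle : ∀ n : ℕ, f (n + N) ≤ f N + n * c := by
    intro n
    induction n with
    | zero => simp
    | succ n ih =>
      have hstep : f (n + N + 1) - f (n + N) ≤ c := hN (n + N) (Nat.le_add_left N n)
      rw [add_right_comm]
      push_cast
      linarith
  exact tendsto_atBot_mono hle
    (tendsto_atBot_add_const_left _ _ (tendsto_natCast_atTop_atTop.atTop_mul_const_of_neg hc))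

theorem tendsto_atBot_of_tendsto_fwdDiff_iter {n : ℕ} (hf : Tendsto (Δ_[1] ^[n] f) atTop atBot) :
    Tendsto f atTop atBot := by
  induction n generalizing f with
  | zero => exact hf
  | succ n ih =>
    rw [Function.iterate_succ_apply] at hf
    exact tendsto_atBot_of_eventually_fwdDiff_le neg_one_lt_zero
      ((ih hf).eventually_le_atBot (-1))

theorem nonneg_of_fwdDiff_iter_eq_const (hf : ∀ k, 0 ≤ f k) {n : ℕ} {c : ℝ}
    (hc : ∀ k, Δ_[1] ^[n] f k = c) : 0 ≤ c := by
  cases n with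
  | zero => exact hc 0 ▸ hf 0
  | succ n =>
    by_contra! hneg
    rw [Function.iterate_succ_apply'] at hc
    have hbot : Tendsto f atTop atBot :=
      tendsto_atBot_of_tendsto_fwdDiff_iter
        (tendsto_atBot_of_eventually_fwdDiff_le hneg (.of_forall fun k ↦ (hc k).le))
    obtain ⟨k, hk⟩ := (hbot.eventually_lt_atBot 0).exists
    exact (hf k).not_gt hk

end ForwardDifference

theorem star_pow_mul_mul_pow_eq_of_star_mul_mul_eq {R : Type*} [Monoid R] [StarMul R] {a b : R}
    (h : star a * b * a = b) (k : ℕ) : star (a ^ k) * b * a ^ k = b := by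
  induction k with
  | zero => simp
  | succ k ih =>
    calc star (a ^ (k + 1)) * b * a ^ (k + 1) = star a * (star (a ^ k) * b * a ^ k) * a := by
          simp only [pow_succ, star_mul, mul_assoc]
      _ = b := by rw [ih, h]

theorem inner_sum_smul_apply_sum_smul {𝕜 E ι : Type*} [RCLike 𝕜] [NormedAddCommGroup E]
    [InnerProductSpace 𝕜 E] (B : E →L[𝕜] E) (s : Finset ι) (a : ι → 𝕜) (v : ι → E) :
    inner 𝕜 (∑ k ∈ s, a k • v k) (B (∑ k ∈ s, a k • v k)) =
      ∑ k ∈ s, ∑ l ∈ s, (starRingEnd 𝕜) (a k) * a l * inner 𝕜 (v k) (B (v l)) := by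
  simp only [map_sum, map_smul, sum_inner, inner_sum, inner_smul_left, inner_smul_right,
    Finset.mul_sum, mul_assoc]
  rw [Finset.sum_comm]
  simp only [mul_left_comm]

section Beta

variable (T : H →L[ℂ] H)

theorem beta_eq_fwdDiff_iter (n : ℕ) :
    beta T n = Δ_[1] ^[n] (fun j ↦ adjoint T ^ j * T ^ j) 0 := by
  rw [fwdDiff_iter_eq_sum_shift, beta]
  refine Finset.sum_congr rfl fun j _ ↦ ?_
  rw [← Int.cast_smul_eq_zsmul ℂ]
  simp

theorem beta_zero : beta T 0 = 1 := by
  simp [beta]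

theorem beta_succ (n : ℕ) : beta T (n + 1) = adjoint T * beta T n * T - beta T n := by
  set P : ℕ → H →L[ℂ] H := fun j ↦ adjoint T ^ j * T ^ j
  have hshift : (fun j ↦ P (j + 1)) =
      (AddMonoidHom.mulLeft (adjoint T)).comp (AddMonoidHom.mulRight T) ∘ P := by
    ext1 j
    simp only [P, Function.comp_apply, AddMonoidHom.coe_comp, AddMonoidHom.coe_mulLeft,
      AddMonoidHom.coe_mulRight, pow_succ' (adjoint T), pow_succ T, mul_assoc]
  rw [beta_eq_fwdDiff_iter, beta_eq_fwdDiff_iter, Function.iterate_succ_apply', fwdDiff,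
    ← zero_add (1 : ℕ), ← fwdDiff_iter_comp_add, hshift, fwdDiff_iter_addMonoidHom_comp]
  simp [P, mul_assoc]

theorem isSelfAdjoint_beta (n : ℕ) : IsSelfAdjoint (beta T n) := by
  induction n with
  | zero => exact beta_zero T ▸ .one _
  | succ n ih =>
    rw [beta_succ, ← star_eq_adjoint]
    exact (ih.conjugate' T).sub ih

theorem adjoint_mul_beta_mul_self {n : ℕ} (hT : beta T (n + 1) = 0) :
    adjoint T * beta T n * T = beta T n := by
  rw [← sub_eq_zero, ← beta_succ, hT]

variable {T}

theorem inner_pow_apply_pow_apply_of_adjoint_mul_mul_self {B : H →L[ℂ] H}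
    (hB : adjoint T * B * T = B) (k : ℕ) (u v : H) :
    inner ℂ ((T ^ k) u) (B ((T ^ k) v)) = inner ℂ u (B v) := by
  rw [← star_eq_adjoint] at hB
  rw [← adjoint_inner_right, ← star_eq_adjoint]
  conv_rhs => rw [← star_pow_mul_mul_pow_eq_of_star_mul_mul_eq hB k]
  rfl

variable (T)

theorem fwdDiff_iter_norm_pow_apply_sq (x : H) (n : ℕ) :
    Δ_[1] ^[n] (fun j ↦ ‖(T ^ j) x‖ ^ 2) =
      fun j ↦ (inner ℂ ((T ^ j) x) (beta T n ((T ^ j) x))).re := by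
  induction n with
  | zero =>
    ext j
    simp [beta_zero, norm_sq_eq_re_inner (𝕜 := ℂ)]
  | succ n ih =>
    rw [Function.iterate_succ_apply', ih]
    ext j
    rw [fwdDiff, beta_succ, sub_apply, mul_apply_eq_comp, mul_apply_eq_comp, inner_sub_right,
      adjoint_inner_right, pow_succ', mul_apply_eq_comp, Complex.sub_re]

theorem isPositive_beta_of_beta_succ_eq_zero {n : ℕ} (hT : beta T (n + 1) = 0) :
    (beta T n).IsPositive := by
  refine isPositive_def'.2 ⟨isSelfAdjoint_beta T n, fun x ↦ ?_⟩
  rw [reApplyInnerSelf_apply, ← inner_conj_symm, RCLike.conj_re]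
  refine nonneg_of_fwdDiff_iter_eq_const (f := fun j ↦ ‖(T ^ j) x‖ ^ 2) (n := n)
    (fun j ↦ by positivity) fun j ↦ ?_
  rw [fwdDiff_iter_norm_pow_apply_sq]
  exact congrArg Complex.re
    (inner_pow_apply_pow_apply_of_adjoint_mul_mul_self (adjoint_mul_beta_mul_self T hT) j x x)

end Beta

theorem inner_pow_apply_apply_pow_eq {T B : H →L[ℂ] H} (hBsa : IsSelfAdjoint B)
    (hB : adjoint T * B * T = B) {e : H} {μ : ℤ → ℂ}
    (hμ : ∀ k : ℕ, μ k = inner ℂ ((T ^ k) e) (B e))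
    (hherm : ∀ k : ℤ, μ (-k) = (starRingEnd ℂ) (μ k)) (k l : ℕ) :
    inner ℂ ((T ^ l) e) (B ((T ^ k) e)) = μ ((l : ℤ) - (k : ℤ)) := by
  rcases le_total k l with hkl | hlk
  · obtain ⟨d, rfl⟩ := Nat.exists_eq_add_of_le hkl
    rw [pow_add, mul_apply_eq_comp, inner_pow_apply_pow_apply_of_adjoint_mul_mul_self hB, ← hμ]
    congr 1
    push_cast
    ring
  · obtain ⟨d, rfl⟩ := Nat.exists_eq_add_of_le hlk
    rw [pow_add, mul_apply_eq_comp, inner_pow_apply_pow_apply_of_adjoint_mul_mul_self hB,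
      ← adjoint_inner_left, hBsa.adjoint_eq, ← inner_conj_symm, ← hμ, ← hherm]
    congr 1
    push_cast
    ring

theorem positive_semidefinite_kernel_general (T : H →L[ℂ] H) (m : ℕ) (hm : 1 ≤ m)
    (hT : beta T m = 0) (e : H)
    (μ : ℤ → ℂ)
    (hμ : ∀ k : ℕ, μ k = (inner ℂ ((T ^ k) e) ((beta T (m - 1)) e) : ℂ))
    (hherm : ∀ k : ℤ, μ (-k) = (starRingEnd ℂ) (μ k)) :
    (∀ k l : ℕ, (inner ℂ ((T ^ l) e) ((beta T (m - 1)) ((T ^ k) e)) : ℂ) = μ ((l : ℤ) - (k : ℤ))) ∧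
    ∀ (N : ℕ) (a : ℕ → ℂ),
      (∑ k ∈ Finset.range (N + 1), ∑ l ∈ Finset.range (N + 1),
          a k * (starRingEnd ℂ) (a l) * μ ((l : ℤ) - (k : ℤ)))
        = (inner ℂ (∑ k ∈ Finset.range (N + 1), a k • (T ^ k) e)
            ((beta T (m - 1)) (∑ k ∈ Finset.range (N + 1), a k • (T ^ k) e)) : ℂ) ∧
      0 ≤ (inner ℂ (∑ k ∈ Finset.range (N + 1), a k • (T ^ k) e)
            ((beta T (m - 1)) (∑ k ∈ Finset.range (N + 1), a k • (T ^ k) e)) : ℂ).re ∧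
      (inner ℂ (∑ k ∈ Finset.range (N + 1), a k • (T ^ k) e)
            ((beta T (m - 1)) (∑ k ∈ Finset.range (N + 1), a k • (T ^ k) e)) : ℂ).im = 0 := by
  rw [← Nat.sub_add_cancel hm] at hT
  have hpos := isPositive_beta_of_beta_succ_eq_zero T hT
  have htoeplitz := inner_pow_apply_apply_pow_eq hpos.isSelfAdjoint
    (adjoint_mul_beta_mul_self T hT) hμ hherm
  refine ⟨htoeplitz, fun N a ↦ ⟨?_, ?_⟩⟩
  · rw [inner_sum_smul_apply_sum_smul, Finset.sum_comm]
    refine Finset.sum_congr rfl fun k _ ↦ Finset.sum_congr rfl fun l _ ↦ ?_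
    rw [htoeplitz]
    ring
  · obtain ⟨hre, him⟩ := Complex.nonneg_iff.1 (hpos.inner_nonneg_right _)
    exact ⟨hre, him.symm⟩

theorem positive_semidefinite_kernel (T : H →L[ℂ] H) (m : ℕ) (hm : 1 ≤ m)
    (hT : beta T m = 0) (e : H) (he : ‖e‖ = 1)
    (μ : ℤ → ℂ)
    (hμ : ∀ k : ℕ, μ k = (inner ℂ ((T ^ k) e) ((beta T (m - 1)) e) : ℂ))
    (hherm : ∀ k : ℤ, μ (-k) = (starRingEnd ℂ) (μ k)) :
    (∀ k l : ℕ, (inner ℂ ((T ^ l) e) ((beta T (m - 1)) ((T ^ k) e)) : ℂ) = μ ((l : ℤ) - (k : ℤ))) ∧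
    ∀ (N : ℕ) (a : ℕ → ℂ),
      (∑ k ∈ Finset.range (N + 1), ∑ l ∈ Finset.range (N + 1),
          a k * (starRingEnd ℂ) (a l) * μ ((l : ℤ) - (k : ℤ)))
        = (inner ℂ (∑ k ∈ Finset.range (N + 1), a k • (T ^ k) e)
            ((beta T (m - 1)) (∑ k ∈ Finset.range (N + 1), a k • (T ^ k) e)) : ℂ) ∧
      0 ≤ (inner ℂ (∑ k ∈ Finset.range (N + 1), a k • (T ^ k) e)
            ((beta T (m - 1)) (∑ k ∈ Finset.range (N + 1), a k • (T ^ k) e)) : ℂ).re ∧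
      (inner ℂ (∑ k ∈ Finset.range (N + 1), a k • (T ^ k) e)
            ((beta T (m - 1)) (∑ k ∈ Finset.range (N + 1), a k • (T ^ k) e)) : ℂ).im = 0 :=
  positive_semidefinite_kernel_general T m hm hT e μ hμ hherm
end

section
/- Let T be a bounded m-isometry on a complex Hilbert space H with m ≥ 1, and let e be a unit cyclic vector. Define the sesquilinear form on analytic polynomials by ⟨z^k, z^l⟩ := ∑_{j=0}^{m−1} C(min(k,l), j) μ_j(l−k), where μ_j(i) = ⟨β_j(T)e, T^i e⟩ for i ≥ 0 and μ_j(−i) = conj(μ_j(i)). Then for all k, l ≥ 0, ⟨z^k, z^l⟩ = ⟨T^k e, T^l e⟩_H. -/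
open ContinuousLinearMap

variable {H : Type*} [NormedAddCommGroup H] [InnerProductSpace ℂ H] [CompleteSpace H]

/-!
With `Φ X = T† X T`, the operator `β_n` is `(Φ - 1)ⁿ 1` and `T†ᵏ Tᵏ = Φᵏ 1`. Expanding
`Φᵏ = ((Φ - 1) + 1)ᵏ` by the binomial theorem gives `T†ᵏ Tᵏ = ∑ C(k, j) β_j`, and
`β_j = (Φ - 1)^(j - m) β_m = 0` for `j ≥ m`. For `k ≤ l` this turns
`⟨Tˡ e, Tᵏ e⟩ = ⟨T^(l-k) e, T†ᵏ Tᵏ e⟩` into the model form; the case `l < k` is its conjugate.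
-/

noncomputable def adjointConj (T : H →L[ℂ] H) : Module.End ℂ (H →L[ℂ] H) :=
  LinearMap.mulLeftRight ℂ (adjoint T, T)

lemma adjointConj_pow_apply (T : H →L[ℂ] H) (j : ℕ) (X : H →L[ℂ] H) :
    (adjointConj T ^ j) X = adjoint T ^ j * X * T ^ j := by
  induction j with
  | zero => simp
  | succ j ih =>
    rw [pow_succ', Module.End.mul_apply, ih, adjointConj, LinearMap.mulLeftRight_apply,
      pow_succ', pow_succ]
    simp only [mul_assoc]

lemma beta_eq_sub_one_pow_apply (T : H →L[ℂ] H) (n : ℕ) :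
    beta T n = ((adjointConj T - 1) ^ n) 1 := by
  rw [sub_eq_add_neg, ((Commute.one_right (adjointConj T)).neg_right).add_pow,
    LinearMap.sum_apply, beta]
  refine Finset.sum_congr rfl fun j _ => ?_
  have hscalar : ((-1) ^ (n - j) * n.choose j : Module.End ℂ (H →L[ℂ] H)) =
      algebraMap ℂ _ ((-1) ^ (n - j) * n.choose j) := by
    simp
  rw [mul_assoc, hscalar, Module.End.mul_apply, Module.algebraMap_end_apply, map_smul,
    adjointConj_pow_apply, mul_one]

lemma beta_eq_zero_of_le {T : H →L[ℂ] H} {m : ℕ} (hT : beta T m = 0) {n : ℕ}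
    (hmn : m ≤ n) : beta T n = 0 := by
  rw [beta_eq_sub_one_pow_apply, ← Nat.sub_add_cancel hmn, pow_add, Module.End.mul_apply,
    ← beta_eq_sub_one_pow_apply, hT, map_zero]

lemma adjoint_pow_mul_pow_eq_sum_beta_s19 (T : H →L[ℂ] H) (k : ℕ) :
    adjoint T ^ k * T ^ k = ∑ j ∈ Finset.range (k + 1), (k.choose j : ℂ) • beta T j := by
  rw [← mul_one (adjoint T ^ k), ← adjointConj_pow_apply, ← sub_add_cancel (adjointConj T) 1,
    (Commute.one_right _).add_pow, LinearMap.sum_apply]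
  refine Finset.sum_congr rfl fun j _ => ?_
  rw [one_pow, mul_one, Module.End.mul_apply, Module.End.natCast_apply, map_nsmul,
    ← beta_eq_sub_one_pow_apply, Nat.cast_smul_eq_nsmul]

lemma adjoint_pow_mul_pow_eq_sum_range_beta {T : H →L[ℂ] H} {m : ℕ} (hT : beta T m = 0)
    (k : ℕ) :
    adjoint T ^ k * T ^ k = ∑ j ∈ Finset.range m, (k.choose j : ℂ) • beta T j := by
  have hchoose : ∀ j ≥ k + 1, (k.choose j : ℂ) • beta T j = 0 := fun j hj => by
    rw [Nat.choose_eq_zero_of_lt hj, Nat.cast_zero, zero_smul]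
  have hbeta : ∀ j ≥ m, (k.choose j : ℂ) • beta T j = 0 := fun j hj => by
    rw [beta_eq_zero_of_le hT hj, smul_zero]
  rw [adjoint_pow_mul_pow_eq_sum_beta_s19, ← Finset.eventually_constant_sum hchoose le_self_add,
    Finset.eventually_constant_sum hbeta le_add_self]

lemma inner_pow_apply_eq_sum_beta {T : H →L[ℂ] H} {m : ℕ} (hT : beta T m = 0) (e : H)
    {k l : ℕ} (hkl : k ≤ l) :
    inner ℂ ((T ^ l) e) ((T ^ k) e) =
      ∑ j ∈ Finset.range m, (k.choose j : ℂ) * inner ℂ ((T ^ (l - k)) e) (beta T j e) := by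
  obtain ⟨d, rfl⟩ := Nat.exists_eq_add_of_le hkl
  rw [Nat.add_sub_cancel_left, pow_add, mul_apply_eq_comp, ← adjoint_inner_right,
    ← star_eq_adjoint, star_pow, star_eq_adjoint, ← mul_apply_eq_comp,
    adjoint_pow_mul_pow_eq_sum_range_beta hT, sum_apply, inner_sum]
  simp only [smul_apply, inner_smul_right]

theorem model_form_eq_inner_general (T : H →L[ℂ] H) (m : ℕ)
    (hT : beta T m = 0) (e : H)
    (μf : ℕ → ℤ → ℂ)
    (hμ : ∀ j i : ℕ, μf j i = (inner ℂ ((T ^ i) e) ((beta T j) e) : ℂ))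
    (hherm : ∀ (j : ℕ) (i : ℤ), μf j (-i) = (starRingEnd ℂ) (μf j i)) :
    ∀ k l : ℕ,
      ∑ j ∈ Finset.range m, ((min k l).choose j : ℂ) * μf j ((l : ℤ) - (k : ℤ))
        = (inner ℂ ((T ^ l) e) ((T ^ k) e) : ℂ) := by
  intro k l
  rcases le_total k l with hkl | hlk
  · have hdiff : (l : ℤ) - k = ((l - k : ℕ) : ℤ) := by omega
    simp only [min_eq_left hkl, hdiff, hμ, inner_pow_apply_eq_sum_beta hT e hkl]
  · have hdiff : (l : ℤ) - k = -((k - l : ℕ) : ℤ) := by omega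
    rw [min_eq_right hlk, hdiff, ← inner_conj_symm, inner_pow_apply_eq_sum_beta hT e hlk, map_sum]
    simp only [hherm, hμ, map_mul, map_natCast]

theorem model_form_eq_inner (T : H →L[ℂ] H) (m : ℕ) (hm : 1 ≤ m)
    (hT : beta T m = 0) (e : H) (he : ‖e‖ = 1)
    (hcyc : (Submodule.span ℂ (Set.range fun k : ℕ => (T ^ k) e)).topologicalClosure = ⊤)
    (μf : ℕ → ℤ → ℂ)
    (hμ : ∀ j i : ℕ, μf j i = (inner ℂ ((T ^ i) e) ((beta T j) e) : ℂ))
    (hherm : ∀ (j : ℕ) (i : ℤ), μf j (-i) = (starRingEnd ℂ) (μf j i)) :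
    ∀ k l : ℕ,
      ∑ j ∈ Finset.range m, ((min k l).choose j : ℂ) * μf j ((l : ℤ) - (k : ℤ))
        = (inner ℂ ((T ^ l) e) ((T ^ k) e) : ℂ) :=
  model_form_eq_inner_general T m hT e μf hμ hherm
end
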